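/- arXiv:1212.6107 — 2 statements merged into one kernel-verified Lean document; each statement's English description precedes it below -/
import Mathlib

section
/- If nonzero vectors a_1, ..., a_n in R_{max,+}^m form a minimal generating system for a vector b (that is, b is a max-plus linear combination of a_1,...,a_n but is not a max-plus linear combination of any proper subsystem), then the representation of b as a max-plus linear combination b = x_1 ⊗ a_1 ⊕ ... ⊕ x_n ⊗ a_n is unique: if b = ⊕_i x_i ⊗ a_i = ⊕_i x'_i ⊗ a_i then x_i = x'_i for all i. -/
/-! If `x k < x' k` for two representations `x`, `x'` of `b`, then in every row `i` either `a k i = ⊥`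
or the term `x k + a k i` lies strictly below `x' k + a k i ≤ b i`; in both cases it does not
contribute to the maximum, so `x` with the `k`-th term dropped still represents `b`. Minimality
forbids this, hence `x = x'`. -/

namespace Finset

variable {ι β : Type*} [DecidableEq ι] {s : Finset ι} {f : ι → β} {k : ι}

lemma sup_erase_eq_of_eq_bot [SemilatticeSup β] [OrderBot β] (h : f k = ⊥) :
    (s.erase k).sup f = s.sup f := by
  by_cases hk : k ∈ s
  · conv_rhs => rw [← insert_erase hk, sup_insert, h, bot_sup_eq]
  · rw [erase_eq_of_notMem hk]

lemma sup_erase_eq_of_lt_sup [LinearOrder β] [OrderBot β] (h : f k < s.sup f) :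
    (s.erase k).sup f = s.sup f := by
  by_cases hk : k ∈ s
  · have hsplit : s.sup f = f k ⊔ (s.erase k).sup f := by
      rw [← sup_insert, insert_erase hk]
    rw [hsplit] at h ⊢
    exact (sup_eq_right.mpr ((lt_sup_iff.mp h).resolve_left (lt_irrefl _)).le).symm
  · rw [erase_eq_of_notMem hk]

end Finset

lemma maxPlus_sup_erase_of_lt {ι ρ α : Type*} [DecidableEq ι] [LinearOrder α] [Add α]
    [AddRightStrictMono α] {s : Finset ι} (a : ι → ρ → WithBot α) (b : ρ → WithBot α)
    {x x' : ι → WithBot α} (hx : ∀ i, b i = s.sup fun j => x j + a j i)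
    (hx' : ∀ i, b i = s.sup fun j => x' j + a j i) {k : ι} (hk : k ∈ s) (hlt : x k < x' k) :
    ∀ i, b i = (s.erase k).sup fun j => x j + a j i := by
  intro i
  rw [hx i]
  by_cases hak : a k i = ⊥
  · exact (Finset.sup_erase_eq_of_eq_bot (by simp [hak])).symm
  · refine (Finset.sup_erase_eq_of_lt_sup ?_).symm
    calc x k + a k i < x' k + a k i := WithBot.add_lt_add_right hak hlt
      _ ≤ s.sup (fun j => x' j + a j i) := Finset.le_sup (f := fun j => x' j + a j i) hk
      _ = s.sup (fun j => x j + a j i) := by rw [← hx i, ← hx' i]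

theorem stmt_2_general (m n : ℕ) (a : Fin n → Fin m → WithBot ℝ) (b : Fin m → WithBot ℝ)
    (hmin : ∀ s : Finset (Fin n), s ≠ Finset.univ →
      ¬ ∃ x : Fin n → WithBot ℝ, ∀ i, b i = s.sup fun j => x j + a j i) :
    ∀ x x' : Fin n → WithBot ℝ,
      (∀ i, b i = Finset.univ.sup fun j => x j + a j i) →
      (∀ i, b i = Finset.univ.sup fun j => x' j + a j i) →
      x = x' := by
  intro x x' hx hx'
  funext k
  have hproper : Finset.univ.erase k ≠ Finset.univ := (Finset.erase_ssubset (Finset.mem_univ k)).ne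
  rcases lt_trichotomy (x k) (x' k) with hlt | heq | hgt
  · exact absurd ⟨x, maxPlus_sup_erase_of_lt a b hx hx' (Finset.mem_univ k) hlt⟩ (hmin _ hproper)
  · exact heq
  · exact absurd ⟨x', maxPlus_sup_erase_of_lt a b hx' hx (Finset.mem_univ k) hgt⟩ (hmin _ hproper)

/-- If nonzero vectors a_1,...,a_n in R_{max,+}^m form a minimal generating system
for b (b is a max-plus linear combination of the whole system but of no proper
subsystem), then the representation of b as a max-plus linear combination is unique. -/
theorem stmt_2 (m n : ℕ) (a : Fin n → Fin m → WithBot ℝ) (b : Fin m → WithBot ℝ)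
    (ha : ∀ j, a j ≠ fun _ => (⊥ : WithBot ℝ))
    (hgen : ∃ x : Fin n → WithBot ℝ, ∀ i, b i = Finset.univ.sup fun j => x j + a j i)
    (hmin : ∀ s : Finset (Fin n), s ≠ Finset.univ →
      ¬ ∃ x : Fin n → WithBot ℝ, ∀ i, b i = s.sup fun j => x j + a j i) :
    ∀ x x' : Fin n → WithBot ℝ,
      (∀ i, b i = Finset.univ.sup fun j => x j + a j i) →
      (∀ i, b i = Finset.univ.sup fun j => x' j + a j i) →
      x = x' :=
  stmt_2_general m n a b hmin
end

section
/- Let A be an m×n real matrix, d ∈ R^m, and suppose the columns a_1,...,a_n of A form a minimal generating system for d in the max-plus sense. Then the equation max_j(a_{ij} + x_j) = d_i (for all i) has the unique solution x_j = min_k(d_k - a_{kj}). -/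
/-!
The principal solution `x̄ⱼ = minₖ (dₖ - aₖⱼ)` is the greatest `x` with `A ⊗ x ≤ d`, so it solves
`A ⊗ x = d` as soon as the system is solvable at all, and every solution lies below it. If a solution
`x` had `xⱼ < x̄ⱼ`, then `aᵢⱼ + xⱼ < aᵢⱼ + x̄ⱼ ≤ dᵢ` in every row, so every row maximum is attained
off column `j` and the columns other than `aⱼ` already generate `d`, against minimality.
-/

namespace MaxPlus

variable {ι κ : Type*}

noncomputable def mulVec (A : ι → κ → ℝ) (x : κ → ℝ) (i : ι) : ℝ := ⨆ j, A i j + x j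

noncomputable def principalSolution (A : ι → κ → ℝ) (d : ι → ℝ) (j : κ) : ℝ := ⨅ i, (d i - A i j)

variable {A : ι → κ → ℝ} {d : ι → ℝ} {x : κ → ℝ}

lemma le_mulVec [Finite κ] (i : ι) (j : κ) : A i j + x j ≤ mulVec A x i :=
  le_ciSup (f := fun j => A i j + x j) (Set.finite_range _).bddAbove j

lemma mulVec_mono [Finite κ] {y : κ → ℝ} (h : x ≤ y) (i : ι) : mulVec A x i ≤ mulVec A y i :=
  ciSup_mono (Set.finite_range _).bddAbove fun j => add_le_add_right (h j) _

lemma add_principalSolution_le [Finite ι] (i : ι) (j : κ) :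
    A i j + principalSolution A d j ≤ d i := by
  have := ciInf_le (Set.finite_range fun k => d k - A k j).bddBelow i
  unfold principalSolution
  linarith

lemma le_principalSolution [Finite ι] [Nonempty ι] [Finite κ] (h : ∀ i, mulVec A x i ≤ d i) :
    x ≤ principalSolution A d :=
  fun j => le_ciInf fun i => by linarith [le_mulVec (A := A) (x := x) i j, h i]

lemma mulVec_principalSolution [Finite ι] [Nonempty ι] [Finite κ] [Nonempty κ]
    (h : ∃ x, mulVec A x = d) : mulVec A (principalSolution A d) = d := by
  obtain ⟨x, rfl⟩ := h
  funext i
  exact le_antisymm (ciSup_le (add_principalSolution_le i))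
    (mulVec_mono (le_principalSolution fun _ => le_rfl) i)

lemma exists_ne_add_eq_of_lt_principalSolution [Finite ι] [Finite κ] (hx : mulVec A x = d)
    {j₀ : κ} (hlt : x j₀ < principalSolution A d j₀) (i : ι) : ∃ j ≠ j₀, A i j + x j = d i := by
  have : Nonempty κ := ⟨j₀⟩
  obtain ⟨j, hj⟩ := exists_eq_ciSup_of_finite (f := fun j => A i j + x j)
  have hjd : A i j + x j = d i := hj.trans (congrFun hx i)
  refine ⟨j, ?_, hjd⟩
  rintro rfl
  linarith [add_principalSolution_le (A := A) (d := d) i j]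

lemma exists_proper_generating_of_ne_principalSolution [Finite ι] [Nonempty ι] [Fintype κ]
    [DecidableEq κ] (hx : mulVec A x = d) (hne : x ≠ principalSolution A d) :
    ∃ (s : Finset κ) (hs : s.Nonempty), s ≠ Finset.univ ∧
      ∃ y : κ → ℝ, ∀ i, d i = s.sup' hs fun j => y j + A i j := by
  obtain ⟨j₀, hj₀⟩ := Function.ne_iff.mp hne
  have hlt : x j₀ < principalSolution A d j₀ :=
    (le_principalSolution (hx ▸ fun _ => le_rfl) j₀).lt_of_ne hj₀
  have hrow := exists_ne_add_eq_of_lt_principalSolution hx hlt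
  have hs : (Finset.univ.erase j₀).Nonempty :=
    let ⟨j, hj, _⟩ := hrow (Classical.arbitrary ι)
    ⟨j, Finset.mem_erase.mpr ⟨hj, Finset.mem_univ j⟩⟩
  refine ⟨_, hs, (Finset.erase_ssubset (Finset.mem_univ j₀)).ne, x, fun i => le_antisymm ?_ ?_⟩
  · obtain ⟨j, hj, hjd⟩ := hrow i
    calc d i = x j + A i j := by rw [← hjd, add_comm]
      _ ≤ _ := Finset.le_sup' (fun j => x j + A i j)
        (Finset.mem_erase.mpr ⟨hj, Finset.mem_univ j⟩)
  · exact Finset.sup'_le _ _ fun j _ => by rw [add_comm, ← hx]; exact le_mulVec i j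

end MaxPlus

open MaxPlus in
/-- If the columns of A form a minimal generating system for d (d is a max-plus
linear combination of all columns but of no proper subsystem), then the equation
max_j(a_{ij} + x_j) = d_i has the unique solution x_j = min_k(d_k - a_{kj}). -/
theorem stmt_16 (m n : ℕ) (hm : 0 < m) (hn : 0 < n)
    (A : Fin m → Fin n → ℝ) (d : Fin m → ℝ)
    (hgen : ∃ x : Fin n → ℝ, ∀ i, d i = ⨆ j, (x j + A i j))
    (hmin : ∀ (s : Finset (Fin n)) (hs : s.Nonempty), s ≠ Finset.univ →
      ¬ ∃ x : Fin n → ℝ, ∀ i, d i = s.sup' hs fun j => x j + A i j) :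
    (∀ i, (⨆ j, (A i j + ⨅ k, (d k - A k j))) = d i) ∧
    ∀ x : Fin n → ℝ, (∀ i, (⨆ j, (A i j + x j)) = d i) →
      ∀ j, x j = ⨅ k, (d k - A k j) := by
  have : Nonempty (Fin m) := ⟨⟨0, hm⟩⟩
  have : Nonempty (Fin n) := ⟨⟨0, hn⟩⟩
  have hsolv : ∃ x, mulVec A x = d := by
    obtain ⟨x, hx⟩ := hgen
    exact ⟨x, funext fun i => by simp only [hx i, mulVec, add_comm]⟩
  refine ⟨congrFun (mulVec_principalSolution hsolv), fun x hx => ?_⟩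
  suffices x = principalSolution A d from congrFun this
  by_contra hne
  obtain ⟨s, hs, hsu, y, hy⟩ := exists_proper_generating_of_ne_principalSolution (funext hx) hne
  exact hmin s hs hsu ⟨y, hy⟩
end
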